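/- Vanishing of regular δ̂-closed 2-increments: let T > 0 and μ > 1. If q : S_T² → L^p(ℝ^n) is continuous, satisfies q_{ts} = q_{tu} + S_{t−u}(q_{us}) for all 0 ≤ s ≤ u ≤ t ≤ T, and ‖q_{ts}‖_{L^p} ≤ C (t−s)^μ for all s ≤ t and some constant C, then q_{ts} = 0 for all 0 ≤ s ≤ t ≤ T. -/

import Mathlib

/-!
Telescoping the closedness relation along the uniform partition `u_k = s + k (t - s) / N` and
using that every `S_r`, `r > 0`, is a contraction gives
`‖q_{ts}‖ ≤ N · C ((t - s) / N)^μ = C (t - s)^μ N^{1 - μ}`, which tends to `0` since `μ > 1`.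
The contraction property is Young's inequality for the Gaussian probability density `g_r`:
pointwise, `|g_r * φ|^p ≤ g_r * |φ|^p` by Jensen for the probability measure `g_r dξ`, and
integrating, Tonelli and translation invariance give `‖g_r * φ‖_p^p ≤ ‖φ‖_p^p`.
-/
open MeasureTheory Real
open scoped ENNReal

/-- The heat kernel on ℝ^n: `g_t(ξ) = (2πt)^(-n/2) exp(-|ξ|²/(2t))`. -/
noncomputable def heatKernel (n : ℕ) (t : ℝ) : EuclideanSpace ℝ (Fin n) → ℝ :=
  fun ξ => (2 * π * t) ^ (-(n : ℝ) / 2) * Real.exp (-‖ξ‖ ^ 2 / (2 * t))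

/-- Convolution of two real functions on ℝ^n. -/
noncomputable def convol {n : ℕ} (f g : EuclideanSpace ℝ (Fin n) → ℝ) :
    EuclideanSpace ℝ (Fin n) → ℝ :=
  fun ξ => ∫ η, f η * g (ξ - η)

/-- The Lebesgue space `L^p(ℝ^n)`. -/
abbrev LpR (n : ℕ) (p : ℝ) : Type :=
  Lp ℝ (ENNReal.ofReal p) (volume : Measure (EuclideanSpace ℝ (Fin n)))

open Filter Topology

lemma tendsto_natCast_mul_div_natCast_rpow {a μ : ℝ} (ha : 0 ≤ a) (hμ : 1 < μ) :
    Tendsto (fun N : ℕ => (N : ℝ) * (a / N) ^ μ) atTop (𝓝 0) := by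
  have hdecay : Tendsto (fun N : ℕ => a ^ μ * (N : ℝ) ^ (-(μ - 1))) atTop (𝓝 0) := by
    have h := ((tendsto_rpow_neg_atTop (sub_pos.2 hμ)).comp
      tendsto_natCast_atTop_atTop).const_mul (a ^ μ)
    rwa [mul_zero] at h
  refine hdecay.congr' ?_
  filter_upwards [eventually_gt_atTop 0] with N hN
  have hN' : (0 : ℝ) < N := by exact_mod_cast hN
  rw [Real.div_rpow ha hN'.le, Real.rpow_neg hN'.le, Real.rpow_sub hN', Real.rpow_one]
  field_simp

section ClosedIncrement

variable {E : Type*} [NormedAddCommGroup E] {S : ℝ → E → E} {q : ℝ → ℝ → E} {T μ C : ℝ}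

def IsClosedIncrement (S : ℝ → E → E) (T : ℝ) (q : ℝ → ℝ → E) : Prop :=
  ∀ s u t, 0 ≤ s → s ≤ u → u ≤ t → t ≤ T → q t s = q t u + S (t - u) (q u s)

lemma closed_increment_diag_eq_zero (hμ : μ ≠ 0)
    (hbound : ∀ s t, 0 ≤ s → s ≤ t → t ≤ T → ‖q t s‖ ≤ C * (t - s) ^ μ)
    {s : ℝ} (hs : 0 ≤ s) (hsT : s ≤ T) : q s s = 0 := by
  simpa [Real.zero_rpow hμ] using hbound s s hs le_rfl hsT

lemma norm_closed_increment_le_of_uniform_partition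
    (hS : ∀ r, 0 < r → ∀ x, ‖S r x‖ ≤ ‖x‖)
    (hclosed : IsClosedIncrement S T q)
    (hbound : ∀ s t, 0 ≤ s → s ≤ t → t ≤ T → ‖q t s‖ ≤ C * (t - s) ^ μ) (hμ : μ ≠ 0)
    {s δ : ℝ} (hs : 0 ≤ s) (hδ : 0 < δ) :
    ∀ k : ℕ, s + k * δ ≤ T → ‖q (s + k * δ) s‖ ≤ k * (C * δ ^ μ) := by
  intro k
  induction k with
  | zero =>
    intro hsT
    simp [closed_increment_diag_eq_zero hμ hbound hs (by simpa using hsT)]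
  | succ k ih =>
    intro hkT
    push_cast at hkT ⊢
    have hk : s + k * δ ≤ s + (k + 1) * δ := by linarith
    have hk0 : s ≤ s + k * δ := le_add_of_nonneg_right (by positivity)
    have hstep : s + (k + 1) * δ - (s + k * δ) = δ := by ring
    have hlast := hbound _ _ (hs.trans hk0) hk hkT
    rw [hstep] at hlast
    rw [hclosed s (s + k * δ) _ hs hk0 hk hkT, hstep]
    calc ‖q (s + (k + 1) * δ) (s + k * δ) + S δ (q (s + k * δ) s)‖
        ≤ C * δ ^ μ + k * (C * δ ^ μ) :=
          (norm_add_le _ _).trans (add_le_add hlast ((hS δ hδ _).trans (ih (by linarith))))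
      _ = (k + 1) * (C * δ ^ μ) := by ring

theorem closed_increment_eq_zero_of_norm_le_rpow
    (hS : ∀ r, 0 < r → ∀ x, ‖S r x‖ ≤ ‖x‖)
    (hclosed : IsClosedIncrement S T q)
    (hbound : ∀ s t, 0 ≤ s → s ≤ t → t ≤ T → ‖q t s‖ ≤ C * (t - s) ^ μ) (hμ : 1 < μ)
    {s t : ℝ} (hs : 0 ≤ s) (hst : s ≤ t) (htT : t ≤ T) : q t s = 0 := by
  obtain rfl | hst := hst.eq_or_lt
  · exact closed_increment_diag_eq_zero (by linarith) hbound hs htT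
  have hpartition : ∀ N : ℕ, 0 < N → ‖q t s‖ ≤ C * (N * ((t - s) / N) ^ μ) := by
    intro N hN
    have hN' : (0 : ℝ) < N := by exact_mod_cast hN
    have hend : s + N * ((t - s) / N) = t := by field_simp; ring
    have h := norm_closed_increment_le_of_uniform_partition hS hclosed hbound (by linarith) hs
      (div_pos (sub_pos.2 hst) hN') N (hend.symm ▸ htT)
    rw [hend] at h
    linarith
  have hlim := (tendsto_natCast_mul_div_natCast_rpow (sub_nonneg.2 hst.le) hμ).const_mul C
  rw [mul_zero] at hlim
  exact norm_le_zero_iff.1 <| ge_of_tendsto hlim <|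
    (eventually_gt_atTop 0).mono hpartition

end ClosedIncrement

lemma rpow_lintegral_le_lintegral_rpow {α : Type*} [MeasurableSpace α] {ν : Measure α}
    [IsProbabilityMeasure ν] {F : α → ℝ≥0∞} (hF : AEMeasurable F ν) {p : ℝ} (hp : 1 ≤ p) :
    (∫⁻ x, F x ∂ν) ^ p ≤ ∫⁻ x, F x ^ p ∂ν := by
  have h := eLpNorm'_le_eLpNorm'_of_exponent_le one_pos hp ν hF.aestronglyMeasurable
  simp only [eLpNorm'_eq_lintegral_enorm, enorm_eq_self, ENNReal.rpow_one, div_one] at h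
  calc (∫⁻ x, F x ∂ν) ^ p ≤ ((∫⁻ x, F x ^ p ∂ν) ^ (1 / p)) ^ p :=
        ENNReal.rpow_le_rpow h (by linarith)
    _ = ∫⁻ x, F x ^ p ∂ν := by
        rw [← ENNReal.rpow_mul, one_div_mul_cancel (by linarith), ENNReal.rpow_one]

lemma heatKernel_nonneg (n : ℕ) {t : ℝ} (ht : 0 < t) (ξ : EuclideanSpace ℝ (Fin n)) :
    0 ≤ heatKernel n t ξ := by
  unfold heatKernel
  positivity

lemma measurable_heatKernel (n : ℕ) (t : ℝ) : Measurable (heatKernel n t) := by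
  unfold heatKernel
  fun_prop

lemma integral_heatKernel (n : ℕ) {t : ℝ} (ht : 0 < t) :
    ∫ ξ, heatKernel n t ξ = 1 := by
  have h2πt : 0 < 2 * π * t := by positivity
  have hform : heatKernel n t =
      fun ξ => (2 * π * t) ^ (-(n : ℝ) / 2) * rexp (-(2 * t)⁻¹ * ‖ξ‖ ^ 2) := by
    funext ξ
    rw [heatKernel]
    congr 2
    ring
  rw [hform, integral_const_mul, GaussianFourier.integral_rexp_neg_mul_sq_norm (by positivity),
    finrank_euclideanSpace_fin, div_inv_eq_mul,
    show π * (2 * t) = 2 * π * t by ring, ← Real.rpow_add h2πt, neg_div, neg_add_cancel,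
    Real.rpow_zero]

lemma lintegral_ofReal_heatKernel (n : ℕ) {t : ℝ} (ht : 0 < t) :
    ∫⁻ ξ, ENNReal.ofReal (heatKernel n t ξ) = 1 := by
  have hint : Integrable (heatKernel n t) :=
    Integrable.of_integral_ne_zero (by simp [integral_heatKernel n ht])
  rw [← ofReal_integral_eq_lintegral_ofReal hint
    (Eventually.of_forall (heatKernel_nonneg n ht)), integral_heatKernel n ht,
    ENNReal.ofReal_one]

section Convolution

variable {n : ℕ}

lemma convol_congr_ae (g : EuclideanSpace ℝ (Fin n) → ℝ) {f f' : EuclideanSpace ℝ (Fin n) → ℝ}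
    (h : f =ᵐ[volume] f') : convol g f = convol g f' := by
  funext ξ
  refine integral_congr_ae ?_
  filter_upwards [(Measure.measurePreserving_sub_left volume ξ).quasiMeasurePreserving.ae_eq h]
    with η hη
  exact congrArg (g η * ·) hη

theorem eLpNorm_convol_le {g : EuclideanSpace ℝ (Fin n) → ℝ} (hg0 : ∀ ξ, 0 ≤ g ξ)
    (hg : Measurable g) (hg1 : ∫⁻ ξ, ENNReal.ofReal (g ξ) = 1) {p : ℝ} (hp : 1 ≤ p)
    {f : EuclideanSpace ℝ (Fin n) → ℝ} (hf : AEStronglyMeasurable f volume) :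
    eLpNorm (convol g f) (ENNReal.ofReal p) volume ≤ eLpNorm f (ENNReal.ofReal p) volume := by
  obtain ⟨f', hf'm, hff'⟩ := hf
  rw [convol_congr_ae g hff', eLpNorm_congr_ae hff']
  set ν := volume.withDensity fun η => ENNReal.ofReal (g η)
  have : IsProbabilityMeasure ν := ⟨by simp [ν, hg1]⟩
  set F := fun x => ‖f' x‖ₑ
  have hFm : Measurable F := hf'm.measurable.enorm
  have hpointwise : ∀ ξ, ‖convol g f' ξ‖ₑ ^ p ≤ ∫⁻ η, F (ξ - η) ^ p ∂ν := by
    intro ξ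
    have h1 : ‖convol g f' ξ‖ₑ ≤ ∫⁻ η, F (ξ - η) ∂ν := by
      rw [lintegral_withDensity_eq_lintegral_mul _ (by fun_prop) (by fun_prop)]
      refine (enorm_integral_le_lintegral_enorm _).trans_eq (lintegral_congr fun η => ?_)
      simp [F, enorm_mul, Real.enorm_eq_ofReal (hg0 η)]
    exact (ENNReal.rpow_le_rpow h1 (by linarith)).trans
      (rpow_lintegral_le_lintegral_rpow (by fun_prop) hp)
  have htranslate : ∫⁻ ξ, ∫⁻ η, F (ξ - η) ^ p ∂ν = ∫⁻ x, F x ^ p := by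
    rw [lintegral_lintegral_swap (by fun_prop)]
    simp_rw [lintegral_sub_right_eq_self (fun x => F x ^ p)]
    rw [lintegral_const, measure_univ, mul_one]
  have hp0 : ENNReal.ofReal p ≠ 0 := (ENNReal.ofReal_pos.2 (by linarith)).ne'
  rw [eLpNorm_eq_lintegral_rpow_enorm_toReal hp0 ENNReal.ofReal_ne_top,
    eLpNorm_eq_lintegral_rpow_enorm_toReal hp0 ENNReal.ofReal_ne_top,
    ENNReal.toReal_ofReal (by linarith)]
  exact ENNReal.rpow_le_rpow ((lintegral_mono hpointwise).trans_eq htranslate) (by positivity)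

lemma norm_le_norm_of_ae_eq_convol {p : ℝ} [Fact (1 ≤ ENNReal.ofReal p)]
    {g : EuclideanSpace ℝ (Fin n) → ℝ} (hg0 : ∀ ξ, 0 ≤ g ξ) (hg : Measurable g)
    (hg1 : ∫⁻ ξ, ENNReal.ofReal (g ξ) = 1) {φ ψ : LpR n p}
    (h : ψ =ᵐ[volume] convol g φ) : ‖ψ‖ ≤ ‖φ‖ := by
  rw [Lp.norm_def, Lp.norm_def]
  exact ENNReal.toReal_mono (Lp.eLpNorm_ne_top φ) <| (eLpNorm_congr_ae h).trans_le <|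
    eLpNorm_convol_le hg0 hg hg1 (ENNReal.one_le_ofReal.mp Fact.out) (Lp.aestronglyMeasurable φ)

end Convolution

theorem regular_closed_two_increment_vanishes_general
    (n : ℕ) (p : ℝ) [Fact (1 ≤ ENNReal.ofReal p)]
    (S : ℝ → LpR n p →L[ℝ] LpR n p)
    (hSheat : ∀ t : ℝ, 0 < t → ∀ φ : LpR n p,
      ⇑(S t φ) =ᵐ[volume] convol (heatKernel n t) ⇑φ)
    (T : ℝ) (μ : ℝ) (hμ : 1 < μ)
    (q : ℝ → ℝ → LpR n p)
    (hqclosed : ∀ s u t : ℝ, 0 ≤ s → s ≤ u → u ≤ t → t ≤ T →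
      q t s = q t u + S (t - u) (q u s))
    (C : ℝ)
    (hqbound : ∀ s t : ℝ, 0 ≤ s → s ≤ t → t ≤ T → ‖q t s‖ ≤ C * (t - s) ^ μ) :
    ∀ s t : ℝ, 0 ≤ s → s ≤ t → t ≤ T → q t s = 0 := by
  have hcontraction : ∀ r, 0 < r → ∀ φ : LpR n p, ‖S r φ‖ ≤ ‖φ‖ := fun r hr φ =>
    norm_le_norm_of_ae_eq_convol (heatKernel_nonneg n hr) (measurable_heatKernel n r)
      (lintegral_ofReal_heatKernel n hr) (hSheat r hr φ)
  exact fun s t hs hst htT =>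
    closed_increment_eq_zero_of_norm_le_rpow hcontraction hqclosed hqbound hμ hs hst htT

/-- a continuous `δ̂`-closed 2-increment `q` with
`‖q_{ts}‖ ≤ C (t-s)^μ` for some `μ > 1` vanishes identically on the simplex. -/
theorem regular_closed_two_increment_vanishes
    (n : ℕ) (hn : 1 ≤ n) (p : ℝ) (hp : 1 ≤ p) [Fact (1 ≤ ENNReal.ofReal p)]
    (S : ℝ → LpR n p →L[ℝ] LpR n p)
    (hS0 : S 0 = ContinuousLinearMap.id ℝ (LpR n p))
    (hSheat : ∀ t : ℝ, 0 < t → ∀ φ : LpR n p,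
      ⇑(S t φ) =ᵐ[volume] convol (heatKernel n t) ⇑φ)
    (T : ℝ) (hT : 0 < T) (μ : ℝ) (hμ : 1 < μ)
    (q : ℝ → ℝ → LpR n p)
    (hqcont : ContinuousOn (fun r : ℝ × ℝ => q r.1 r.2)
      {r : ℝ × ℝ | 0 ≤ r.2 ∧ r.2 ≤ r.1 ∧ r.1 ≤ T})
    (hqclosed : ∀ s u t : ℝ, 0 ≤ s → s ≤ u → u ≤ t → t ≤ T →
      q t s = q t u + S (t - u) (q u s))
    (C : ℝ)
    (hqbound : ∀ s t : ℝ, 0 ≤ s → s ≤ t → t ≤ T → ‖q t s‖ ≤ C * (t - s) ^ μ) :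
    ∀ s t : ℝ, 0 ≤ s → s ≤ t → t ≤ T → q t s = 0 :=
  regular_closed_two_increment_vanishes_general n p S hSheat T μ hμ q hqclosed C hqbound
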